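/- Let P : ℝ^{n1×n2×n3} → ℝ^{n1×n2×n3} be an orthogonal projection with respect to the Frobenius inner product, let R ∈ ℝ^{n1×n2×n3} be nonzero with P(R) = R, and let M₁ = U(:,1,:) * (S(1,1,:)/‖S(1,1,:)‖_F) * V(:,1,:)^T be the normalized leading rank-one tensor of an ordered t-SVD R = U * S * V^T of R. Then inf_{θ∈ℝ} ‖R − θ·P(M₁)‖_F² ≤ (1 − 1/min(n1,n2))·‖R‖_F². -/

import Mathlib

open scoped BigOperators Matrix Kronecker ComplexConjugate
open Complex

/-- A third-order tensor of size `n1 × n2 × n3` with entries in `R`. -/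
abbrev T3 (n1 n2 n3 : ℕ) (R : Type*) : Type _ := Fin n1 → Fin n2 → Fin n3 → R

namespace T3

variable {n1 n2 n3 l : ℕ}

/-- The Frobenius inner product `⟨A,B⟩ = Σ_{i,j,k} A_{ijk} B_{ijk}`. -/
def tInner (A B : T3 n1 n2 n3 ℝ) : ℝ := ∑ i, ∑ j, ∑ k, A i j k * B i j k

/-- The Frobenius norm `‖A‖_F = √⟨A,A⟩`. -/
noncomputable def tNorm (A : T3 n1 n2 n3 ℝ) : ℝ := Real.sqrt (tInner A A)

/-- The `n × n` DFT matrix, `(F_n)_{ab} = ω^{ab}` (0-based), `ω = exp(-2πi/n)`. -/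
noncomputable def dftMatrix (n : ℕ) : Matrix (Fin n) (Fin n) ℂ :=
  fun a b => Complex.exp (-(2 * (Real.pi : ℂ) * Complex.I) / (n : ℂ)) ^ ((a : ℕ) * (b : ℕ))

/-- The `k`-th frontal slice `Â^{(k)}` of the DFT of `A` along the third dimension:
`Â(i,j,:) = F_{n3} · A(i,j,:)`. -/
noncomputable def hatSlice (A : T3 n1 n2 n3 ℝ) (k : Fin n3) : Matrix (Fin n1) (Fin n2) ℂ :=
  fun i j => ∑ m : Fin n3, dftMatrix n3 k m * (A i j m : ℂ)

/-- The block circulant matrix of `A`: the `(p,q)` block (0-based) is the frontal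
slice `A^{(p-q mod n3)}`. -/
def bcirc (A : T3 n1 n2 n3 ℝ) : Matrix (Fin n3 × Fin n1) (Fin n3 × Fin n2) ℝ :=
  fun p q => A p.2 q.2 (p.1 - q.1)

/-- The block diagonal matrix with diagonal blocks `Â^{(1)}, …, Â^{(n3)}`. -/
noncomputable def bdiag (A : T3 n1 n2 n3 ℝ) : Matrix (Fin n3 × Fin n1) (Fin n3 × Fin n2) ℂ :=
  fun p q => if p.1 = q.1 then hatSlice A p.1 p.2 q.2 else 0

/-- t-product: `(A*B)^{(k)} = Σ_q A^{(k-q mod n3)} B^{(q)}` (circular convolution of slices). -/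
def tprod (A : T3 n1 n2 n3 ℝ) (B : T3 n2 l n3 ℝ) : T3 n1 l n3 ℝ :=
  fun i j k => ∑ q : Fin n3, ∑ p : Fin n2, A i p (k - q) * B p j q

/-- Tensor transpose: `(Aᵀ)^{(k)} = (A^{(-k mod n3)})ᵀ`. -/
def tT (A : T3 n1 n2 n3 ℝ) : T3 n2 n1 n3 ℝ := fun j i k => A i j (-k)

/-- The identity tensor: first frontal slice the identity matrix, other slices zero. -/
def tI (q m : ℕ) : T3 q q m ℝ := fun i j k => if i = j ∧ (k : ℕ) = 0 then 1 else 0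

/-- An orthogonal tensor: `Qᵀ * Q = Q * Qᵀ = I`. -/
def TOrth {n m : ℕ} (Q : T3 n n m ℝ) : Prop :=
  tprod (tT Q) Q = tI n m ∧ tprod Q (tT Q) = tI n m

/-- A partially orthogonal tensor: `Qᵀ * Q = I`. -/
def PartOrth {n q m : ℕ} (Q : T3 n q m ℝ) : Prop := tprod (tT Q) Q = tI q m

/-- f-diagonal tensor: every frontal slice is a diagonal matrix. -/
def FDiag (S : T3 n1 n2 n3 ℝ) : Prop :=
  ∀ (i : Fin n1) (j : Fin n2) (k : Fin n3), (i : ℕ) ≠ (j : ℕ) → S i j k = 0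

/-- Every Fourier-domain frontal slice of `S` has real, nonnegative, nonincreasing
diagonal entries. -/
def OrderedDiag (S : T3 n1 n2 n3 ℝ) : Prop :=
  ∀ k : Fin n3,
    (∀ (i : Fin n1) (j : Fin n2), (i : ℕ) = (j : ℕ) →
      (hatSlice S k i j).im = 0 ∧ 0 ≤ (hatSlice S k i j).re) ∧
    (∀ (i i' : Fin n1) (j j' : Fin n2), (i : ℕ) = (j : ℕ) → (i' : ℕ) = (j' : ℕ) →
      (i : ℕ) ≤ (i' : ℕ) → (hatSlice S k i' j').re ≤ (hatSlice S k i j).re)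

/-- A t-SVD of `A`: `A = U * S * Vᵀ` with `U, V` orthogonal and `S` f-diagonal. -/
def IsTSVD (A : T3 n1 n2 n3 ℝ) (U : T3 n1 n1 n3 ℝ) (S : T3 n1 n2 n3 ℝ)
    (V : T3 n2 n2 n3 ℝ) : Prop :=
  TOrth U ∧ TOrth V ∧ FDiag S ∧ A = tprod (tprod U S) (tT V)

/-- An ordered t-SVD. -/
def IsOrderedTSVD (A : T3 n1 n2 n3 ℝ) (U : T3 n1 n1 n3 ℝ) (S : T3 n1 n2 n3 ℝ)
    (V : T3 n2 n2 n3 ℝ) : Prop :=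
  IsTSVD A U S V ∧ OrderedDiag S

/-- Lateral slice `U(:,i,:)` as an `n1 × 1 × n3` tensor. -/
def lat (U : T3 n1 n2 n3 ℝ) (i : Fin n2) : T3 n1 1 n3 ℝ := fun a _ k => U a i k

/-- Tube `S(i,j,:)` as a `1 × 1 × n3` tensor. -/
def tube (S : T3 n1 n2 n3 ℝ) (i : Fin n1) (j : Fin n2) : T3 1 1 n3 ℝ := fun _ _ k => S i j k

/-- The rank-one term `U(:,i,:) * S(i,j,:) * V(:,j,:)ᵀ`. -/
def rankOne (U : T3 n1 n1 n3 ℝ) (S : T3 n1 n2 n3 ℝ) (V : T3 n2 n2 n3 ℝ)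
    (i : Fin n1) (j : Fin n2) : T3 n1 n2 n3 ℝ :=
  tprod (tprod (lat U i) (tube S i j)) (tT (lat V j))

/-- The normalized leading rank-one tensor
`M₁ = U(:,1,:) * (S(1,1,:)/‖S(1,1,:)‖_F) * V(:,1,:)ᵀ`. -/
noncomputable def leadM (hn1 : 0 < n1) (hn2 : 0 < n2) (U : T3 n1 n1 n3 ℝ)
    (S : T3 n1 n2 n3 ℝ) (V : T3 n2 n2 n3 ℝ) : T3 n1 n2 n3 ℝ :=
  tprod (tprod (lat U ⟨0, hn1⟩)
      (fun _ _ k => S ⟨0, hn1⟩ ⟨0, hn2⟩ k / tNorm (tube S ⟨0, hn1⟩ ⟨0, hn2⟩)))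
    (tT (lat V ⟨0, hn2⟩))

/-- `‖Y‖_{1,F}`: the maximal Euclidean norm of a column fiber of a frontal slice of `Ŷ`. -/
noncomputable def norm1F (Y : T3 n1 n2 n3 ℝ) : ℝ :=
  ⨆ p : Fin n2 × Fin n3, Real.sqrt (∑ i, ‖hatSlice Y p.2 i p.1‖ ^ 2)

/-- The tubal rank: the maximal rank of a frontal slice of the third-mode DFT. -/
noncomputable def tubalRank (X : T3 n1 n2 n3 ℝ) : ℕ :=
  Finset.univ.sup fun k : Fin n3 => (hatSlice X k).rank

end T3

open T3

/-! Write `c = ‖S(1,1,:)‖_F`. Since `bcirc` turns t-products into matrix products and transposes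
into transposes, multiplying by orthogonal tensors preserves the Frobenius inner product; hence
`⟨R, M₁⟩ = c` and `‖M₁‖_F ≤ 1`, so `⟨R, P M₁⟩ = ⟨P R, M₁⟩ = c` and `‖P M₁‖_F ≤ 1`, and `θ = c`
gives `‖R - θ P M₁‖_F² ≤ ‖R‖_F² - c²`. Finally `‖R‖_F² = ‖S‖_F²` is a sum of `min(n1,n2)` diagonal
tube norms, each at most `c²` by Parseval, since the Fourier-domain diagonal entries are
nonnegative and nonincreasing. -/

lemma Matrix.trace_transpose_mul_mul_mul_transpose {m n p q R : Type*} [Fintype m] [Fintype n]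
    [Fintype p] [Fintype q] [DecidableEq n] [DecidableEq q] [CommRing R]
    {U : Matrix m n R} {V : Matrix p q R} (hU : Uᵀ * U = 1) (hV : Vᵀ * V = 1)
    (X Y : Matrix n q R) :
    ((U * X * Vᵀ)ᵀ * (U * Y * Vᵀ)).trace = (Xᵀ * Y).trace := by
  simp only [Matrix.transpose_mul, Matrix.transpose_transpose, Matrix.mul_assoc]
  rw [← Matrix.mul_assoc Uᵀ, hU, Matrix.one_mul, Matrix.trace_mul_comm, Matrix.mul_assoc,
    Matrix.mul_assoc, hV, Matrix.mul_one]

lemma iInf_norm_sub_smul_sq_le {E : Type*} [NormedAddCommGroup E] [InnerProductSpace ℝ E]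
    (x y : E) (hy : ‖y‖ ≤ 1) :
    ⨅ θ : ℝ, ‖x - θ • y‖ ^ 2 ≤ ‖x‖ ^ 2 - inner ℝ x y ^ 2 := by
  refine ciInf_le_of_le ⟨0, by rintro _ ⟨θ, rfl⟩; positivity⟩ (inner ℝ x y) ?_
  rw [norm_sub_sq_real, inner_smul_right, norm_smul, Real.norm_eq_abs, mul_pow, sq_abs]
  have : ‖y‖ ^ 2 ≤ 1 := by nlinarith [norm_nonneg y]
  nlinarith [sq_nonneg (inner ℝ x y)]

lemma Fin.sum_sum_ite_val_eq (a b : ℕ) (C : ℝ) :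
    ∑ i : Fin a, ∑ j : Fin b, (if (i : ℕ) = j then C else 0) = (min a b : ℝ) * C := by
  have hrow (i : Fin a) :
      ∑ j : Fin b, (if (i : ℕ) = j then C else 0) = if (i : ℕ) < b then C else 0 := by
    split_ifs with h
    · rw [Finset.sum_eq_single ⟨i, h⟩] <;> simp +contextual [Fin.ext_iff, eq_comm]
    · exact Finset.sum_eq_zero fun j _ => if_neg (by have := j.isLt; omega)
  simp only [hrow]
  rw [← Finset.sum_filter, Finset.sum_const, Fin.card_filter_val_lt, nsmul_eq_mul, Nat.cast_min]

lemma sum_conj_dftMatrix_mul_dftMatrix {n : ℕ} (m m' : Fin n) :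
    ∑ k, conj (dftMatrix n k m) * dftMatrix n k m' = if m = m' then (n : ℂ) else 0 := by
  have hn : n ≠ 0 := m.pos.ne'
  set ω := Complex.exp (-(2 * (Real.pi : ℂ) * Complex.I) / n)
  have hω : IsPrimitiveRoot ω n := by
    simpa [ω, neg_div, Complex.exp_neg] using (Complex.isPrimitiveRoot_exp n hn).inv
  have hω0 : ω ≠ 0 := hω.ne_zero hn
  set ζ := (ω ^ (m : ℕ))⁻¹ * ω ^ (m' : ℕ)
  have hterm (k : Fin n) : conj (dftMatrix n k m) * dftMatrix n k m' = ζ ^ (k : ℕ) := by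
    change conj (ω ^ ((k : ℕ) * m)) * ω ^ ((k : ℕ) * m') = ζ ^ (k : ℕ)
    rw [mul_comm (k : ℕ) m, mul_comm (k : ℕ) m', pow_mul, pow_mul,
      ← Complex.inv_eq_conj (by rw [norm_pow, norm_pow, hω.norm'_eq_one hn, one_pow, one_pow]),
      ← inv_pow, ← mul_pow]
  simp only [hterm]
  rw [Fin.sum_univ_eq_sum_range (fun k => ζ ^ k)]
  split_ifs with h
  · subst h
    simp [ζ, inv_mul_cancel₀ (pow_ne_zero _ hω0)]
  · have hζ : ζ ≠ 1 := fun h1 =>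
      h (Fin.ext (hω.pow_inj m.isLt m'.isLt ((inv_mul_eq_one₀ (pow_ne_zero _ hω0)).1 h1)))
    have hζn : ζ ^ n = 1 := by
      rw [mul_pow, inv_pow, ← pow_mul, ← pow_mul, mul_comm _ n, mul_comm _ n, pow_mul, pow_mul,
        hω.pow_eq_one, one_pow, one_pow, inv_one, one_mul]
    rw [geom_sum_eq hζ, hζn, sub_self, zero_div]

lemma sum_normSq_dftMatrix_mulVec {n : ℕ} (x : Fin n → ℝ) :
    ∑ k, Complex.normSq (∑ m, dftMatrix n k m * x m) = n * ∑ m, x m ^ 2 := by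
  apply Complex.ofReal_injective
  have hterm (k : Fin n) : (Complex.normSq (∑ m, dftMatrix n k m * x m) : ℂ) =
      ∑ m, ∑ m', (x m * x m' : ℂ) * (conj (dftMatrix n k m) * dftMatrix n k m') := by
    rw [Complex.normSq_eq_conj_mul_self, map_sum, Finset.sum_mul_sum]
    refine Finset.sum_congr rfl fun m _ => Finset.sum_congr rfl fun m' _ => ?_
    rw [map_mul, Complex.conj_ofReal]
    ring
  push_cast
  simp only [hterm]
  rw [Finset.sum_comm, Finset.mul_sum]
  refine Finset.sum_congr rfl fun m _ => ?_
  rw [Finset.sum_comm]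
  simp only [← Finset.mul_sum, sum_conj_dftMatrix_mul_dftMatrix, mul_ite, mul_zero, Finset.sum_ite_eq,
    Finset.mem_univ, ↓reduceIte, sq]
  ring

namespace T3

variable {n1 n2 n3 r s : ℕ}

def toEuclideanSpace : T3 n1 n2 n3 ℝ →ₗ[ℝ] EuclideanSpace ℝ (Fin n1 × Fin n2 × Fin n3) where
  toFun A := WithLp.toLp 2 fun p => A p.1 p.2.1 p.2.2
  map_add' _ _ := rfl
  map_smul' _ _ := rfl

lemma toEuclideanSpace_apply (A : T3 n1 n2 n3 ℝ) (p : Fin n1 × Fin n2 × Fin n3) :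
    toEuclideanSpace A p = A p.1 p.2.1 p.2.2 := rfl

lemma tInner_eq_inner (A B : T3 n1 n2 n3 ℝ) :
    tInner A B = inner ℝ (toEuclideanSpace A) (toEuclideanSpace B) := by
  simp [tInner, PiLp.inner_apply, Fintype.sum_prod_type, mul_comm, toEuclideanSpace_apply]

lemma tNorm_eq_norm (A : T3 n1 n2 n3 ℝ) : tNorm A = ‖toEuclideanSpace A‖ := by
  rw [tNorm, tInner_eq_inner, real_inner_self_eq_norm_sq, Real.sqrt_sq (norm_nonneg _)]

lemma tNorm_sq (A : T3 n1 n2 n3 ℝ) : tNorm A ^ 2 = tInner A A := by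
  rw [tNorm_eq_norm, tInner_eq_inner, real_inner_self_eq_norm_sq]

lemma tNorm_apply_le {P : T3 n1 n2 n3 ℝ → T3 n1 n2 n3 ℝ} (hidem : ∀ X, P (P X) = P X)
    (hsym : ∀ X Y, tInner (P X) Y = tInner X (P Y)) (X : T3 n1 n2 n3 ℝ) :
    tNorm (P X) ≤ tNorm X := by
  have h : tNorm (P X) ^ 2 ≤ tNorm X * tNorm (P X) := by
    rw [tNorm_sq, hsym, hidem, tInner_eq_inner, tNorm_eq_norm, tNorm_eq_norm]
    exact real_inner_le_norm _ _
  rw [tNorm_eq_norm, tNorm_eq_norm] at h ⊢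
  nlinarith [norm_nonneg (toEuclideanSpace X), norm_nonneg (toEuclideanSpace (P X))]

lemma tNorm_inv_smul_self_le (A : T3 n1 n2 n3 ℝ) : tNorm ((tNorm A)⁻¹ • A) ≤ 1 := by
  rcases eq_or_ne (toEuclideanSpace A) 0 with hA | hA
  · simp [tNorm_eq_norm, hA]
  · rw [tNorm_eq_norm, tNorm_eq_norm, map_smul, norm_smul, Real.norm_eq_abs, abs_inv, abs_norm,
      inv_mul_cancel₀ (norm_ne_zero_iff.2 hA)]

lemma tInner_inv_smul_self (A : T3 n1 n2 n3 ℝ) : tInner A ((tNorm A)⁻¹ • A) = tNorm A := by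
  rw [tInner_eq_inner, map_smul, inner_smul_right, real_inner_self_eq_norm_sq, tNorm_eq_norm]
  rcases eq_or_ne ‖toEuclideanSpace A‖ 0 with h | h
  · simp [h]
  · field_simp

section Bcirc

variable [NeZero n3]

lemma bcirc_tprod (A : T3 n1 r n3 ℝ) (B : T3 r n2 n3 ℝ) :
    bcirc (tprod A B) = bcirc A * bcirc B := by
  ext ⟨a, i⟩ ⟨b, j⟩
  simp only [bcirc, tprod, Matrix.mul_apply, Fintype.sum_prod_type]
  exact Fintype.sum_equiv (Equiv.addRight b) _ _ fun q => by simp [sub_sub, add_comm]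

lemma bcirc_tT (A : T3 n1 n2 n3 ℝ) : bcirc (tT A) = (bcirc A)ᵀ := by
  ext ⟨a, i⟩ ⟨b, j⟩
  simp [bcirc, tT]

lemma bcirc_tI (n : ℕ) : bcirc (tI n n3) = 1 := by
  ext ⟨a, i⟩ ⟨b, j⟩
  simp [bcirc, tI, Matrix.one_apply, Prod.ext_iff, Fin.val_eq_zero_iff, sub_eq_zero, and_comm]

lemma trace_transpose_bcirc_mul (A B : T3 n1 n2 n3 ℝ) :
    ((bcirc A)ᵀ * bcirc B).trace = n3 * tInner A B := by
  simp only [Matrix.trace, Matrix.diag, Matrix.mul_apply, Matrix.transpose_apply, bcirc,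
    Fintype.sum_prod_type, tInner, Finset.mul_sum]
  rw [Finset.sum_comm]
  conv_rhs => rw [Finset.sum_comm]
  refine Finset.sum_congr rfl fun j _ => ?_
  rw [Finset.sum_congr rfl fun (b : Fin n3) _ => Finset.sum_comm, Finset.sum_comm]
  refine Finset.sum_congr rfl fun i _ => ?_
  rw [Finset.sum_congr rfl fun b _ =>
      Fintype.sum_equiv (Equiv.subRight b) (fun a => A i j (a - b) * B i j (a - b))
        (fun k => A i j k * B i j k) fun _ => rfl,
    Finset.sum_const, Finset.card_univ, Fintype.card_fin, nsmul_eq_mul, Finset.mul_sum]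

end Bcirc

lemma tInner_tprod_tprod_tT {U : T3 n1 r n3 ℝ} {V : T3 n2 s n3 ℝ} (hU : PartOrth U)
    (hV : PartOrth V) (X Y : T3 r s n3 ℝ) :
    tInner (tprod (tprod U X) (tT V)) (tprod (tprod U Y) (tT V)) = tInner X Y := by
  rcases Nat.eq_zero_or_pos n3 with rfl | hn3
  · simp [tInner]
  have := NeZero.of_pos hn3
  have bcirc_orth {q m : ℕ} {Q : T3 q m n3 ℝ} (hQ : PartOrth Q) : (bcirc Q)ᵀ * bcirc Q = 1 := by
    rw [← bcirc_tT, ← bcirc_tprod, hQ, bcirc_tI]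
  refine mul_left_cancel₀ (Nat.cast_ne_zero.2 hn3.ne' : (n3 : ℝ) ≠ 0) ?_
  rw [← trace_transpose_bcirc_mul, ← trace_transpose_bcirc_mul]
  simp only [bcirc_tprod, bcirc_tT]
  exact Matrix.trace_transpose_mul_mul_mul_transpose (bcirc_orth hU) (bcirc_orth hV) _ _

def tubeSingle (i : Fin r) (j : Fin s) (x : T3 1 1 n3 ℝ) : T3 r s n3 ℝ :=
  fun a b k => if a = i ∧ b = j then x 0 0 k else 0

lemma tube_tubeSingle (i : Fin r) (j : Fin s) (x : T3 1 1 n3 ℝ) :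
    tube (tubeSingle i j x) i j = x := by
  funext a b k
  simp [tube, tubeSingle, Subsingleton.elim a 0, Subsingleton.elim b 0]

lemma tInner_tubeSingle (A : T3 r s n3 ℝ) (i : Fin r) (j : Fin s) (x : T3 1 1 n3 ℝ) :
    tInner A (tubeSingle i j x) = tInner (tube A i j) x := by
  simp [tInner, tube, tubeSingle, ite_and]

lemma tNorm_tubeSingle (i : Fin r) (j : Fin s) (x : T3 1 1 n3 ℝ) :
    tNorm (tubeSingle i j x) = tNorm x := by
  rw [tNorm, tInner_tubeSingle, tube_tubeSingle, tNorm]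

lemma tprod_tprod_lat_tT_lat (U : T3 n1 r n3 ℝ) (V : T3 n2 s n3 ℝ) (i : Fin r) (j : Fin s)
    (x : T3 1 1 n3 ℝ) :
    tprod (tprod (lat U i) x) (tT (lat V j)) = tprod (tprod U (tubeSingle i j x)) (tT V) := by
  funext a b k
  simp [tprod, lat, tT, tubeSingle, ite_and]

lemma natCast_mul_tInner_tube_self (S : T3 n1 n2 n3 ℝ) (i : Fin n1) (j : Fin n2) :
    n3 * tInner (tube S i j) (tube S i j) = ∑ k, Complex.normSq (hatSlice S k i j) := by
  change _ = ∑ k, Complex.normSq (∑ m, dftMatrix n3 k m * (S i j m : ℂ))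
  rw [sum_normSq_dftMatrix_mulVec fun m => S i j m]
  simp [tInner, tube, sq]

lemma tInner_tube_self_le_of_orderedDiag {S : T3 n1 n2 n3 ℝ} (hS : OrderedDiag S)
    {i i' : Fin n1} {j j' : Fin n2} (hij : (i : ℕ) = j) (hij' : (i' : ℕ) = j')
    (hii' : (i : ℕ) ≤ i') :
    tInner (tube S i' j') (tube S i' j') ≤ tInner (tube S i j) (tube S i j) := by
  rcases Nat.eq_zero_or_pos n3 with rfl | hn3
  · simp [tInner]
  refine le_of_mul_le_mul_left ?_ (Nat.cast_pos.2 hn3 : (0 : ℝ) < n3)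
  rw [natCast_mul_tInner_tube_self, natCast_mul_tInner_tube_self]
  refine Finset.sum_le_sum fun k _ => ?_
  obtain ⟨him, hre⟩ := (hS k).1 i j hij
  obtain ⟨him', hre'⟩ := (hS k).1 i' j' hij'
  have hle := (hS k).2 i i' j j' hij hij' hii'
  rw [Complex.normSq_apply, Complex.normSq_apply, him, him']
  nlinarith

lemma tInner_self_le_of_orderedDiag {S : T3 n1 n2 n3 ℝ} (hdiag : FDiag S) (hS : OrderedDiag S)
    (hn1 : 0 < n1) (hn2 : 0 < n2) :
    tInner S S ≤ (min n1 n2 : ℝ) *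
      tInner (tube S ⟨0, hn1⟩ ⟨0, hn2⟩) (tube S ⟨0, hn1⟩ ⟨0, hn2⟩) := by
  calc tInner S S = ∑ i, ∑ j, tInner (tube S i j) (tube S i j) := by simp [tInner, tube]
    _ ≤ ∑ i : Fin n1, ∑ j : Fin n2, if (i : ℕ) = j then
          tInner (tube S ⟨0, hn1⟩ ⟨0, hn2⟩) (tube S ⟨0, hn1⟩ ⟨0, hn2⟩) else 0 := by
      refine Finset.sum_le_sum fun i _ => Finset.sum_le_sum fun j _ => ?_
      split_ifs with hij
      · exact tInner_tube_self_le_of_orderedDiag hS rfl hij (Nat.zero_le _)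
      · simp [tInner, tube, hdiag i j _ hij]
    _ = _ := Fin.sum_sum_ite_val_eq n1 n2 _

lemma leadM_eq_tprod_tubeSingle (hn1 : 0 < n1) (hn2 : 0 < n2) (U : T3 n1 n1 n3 ℝ) (S : T3 n1 n2 n3 ℝ)
    (V : T3 n2 n2 n3 ℝ) :
    leadM hn1 hn2 U S V = tprod (tprod U (tubeSingle ⟨0, hn1⟩ ⟨0, hn2⟩
      ((tNorm (tube S ⟨0, hn1⟩ ⟨0, hn2⟩))⁻¹ • tube S ⟨0, hn1⟩ ⟨0, hn2⟩))) (tT V) := by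
  rw [leadM, tprod_tprod_lat_tT_lat]
  congr
  funext _ _ k
  simp [tube, div_eq_inv_mul]

end T3

theorem stmt_16_general (n1 n2 n3 : ℕ) (hn1 : 0 < n1) (hn2 : 0 < n2)
    (P : T3 n1 n2 n3 ℝ → T3 n1 n2 n3 ℝ)
    (hidem : ∀ X, P (P X) = P X)
    (hsym : ∀ X Y, tInner (P X) Y = tInner X (P Y))
    (R : T3 n1 n2 n3 ℝ) (hR : P R = R)
    (U : T3 n1 n1 n3 ℝ) (S : T3 n1 n2 n3 ℝ) (V : T3 n2 n2 n3 ℝ)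
    (h : IsOrderedTSVD R U S V) :
    ⨅ θ : ℝ, tNorm (R - θ • P (leadM hn1 hn2 U S V)) ^ 2 ≤
      (1 - 1 / (min n1 n2 : ℝ)) * tNorm R ^ 2 := by
  obtain ⟨⟨hU, hV, hdiag, hRdec⟩, hS⟩ := h
  have hM := leadM_eq_tprod_tubeSingle hn1 hn2 U S V
  set t := tube S ⟨0, hn1⟩ ⟨0, hn2⟩
  set M := leadM hn1 hn2 U S V
  have hRM : tInner R (P M) = tNorm t := by
    rw [← hsym, hR, hRdec, hM, tInner_tprod_tprod_tT hU.1 hV.1, tInner_tubeSingle,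
      tInner_inv_smul_self]
  have hPM : tNorm (P M) ≤ 1 := by
    refine (tNorm_apply_le hidem hsym M).trans ?_
    rw [hM, tNorm, tInner_tprod_tprod_tT hU.1 hV.1, ← tNorm, tNorm_tubeSingle]
    exact tNorm_inv_smul_self_le t
  have hRt : tNorm R ^ 2 ≤ (min n1 n2 : ℝ) * tNorm t ^ 2 := by
    rw [tNorm_sq, tNorm_sq, hRdec, tInner_tprod_tprod_tT hU.1 hV.1]
    exact tInner_self_le_of_orderedDiag hdiag hS hn1 hn2
  calc ⨅ θ : ℝ, tNorm (R - θ • P M) ^ 2 ≤ tNorm R ^ 2 - tInner R (P M) ^ 2 := by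
        simpa only [tNorm_eq_norm, tInner_eq_inner, map_sub, map_smul] using
          iInf_norm_sub_smul_sq_le (toEuclideanSpace R) (toEuclideanSpace (P M))
            (tNorm_eq_norm (P M) ▸ hPM)
    _ ≤ (1 - 1 / (min n1 n2 : ℝ)) * tNorm R ^ 2 := by
      rw [hRM, one_sub_mul, one_div_mul_eq_div]
      gcongr
      rwa [div_le_iff₀ (by positivity), mul_comm]

/-- for an orthogonal projection `P`, nonzero `R` with `P(R) = R`, and the
normalized leading rank-one tensor `M₁` of an ordered t-SVD of `R`,
`inf_θ ‖R − θ·P(M₁)‖_F² ≤ (1 − 1/min(n1,n2))·‖R‖_F²`. -/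
theorem stmt_16 (n1 n2 n3 : ℕ) (hn1 : 0 < n1) (hn2 : 0 < n2)
    (P : T3 n1 n2 n3 ℝ → T3 n1 n2 n3 ℝ) (hlin : IsLinearMap ℝ P)
    (hidem : ∀ X, P (P X) = P X)
    (hsym : ∀ X Y, tInner (P X) Y = tInner X (P Y))
    (R : T3 n1 n2 n3 ℝ) (hR0 : R ≠ 0) (hR : P R = R)
    (U : T3 n1 n1 n3 ℝ) (S : T3 n1 n2 n3 ℝ) (V : T3 n2 n2 n3 ℝ)
    (h : IsOrderedTSVD R U S V) :
    ⨅ θ : ℝ, tNorm (R - θ • P (leadM hn1 hn2 U S V)) ^ 2 ≤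
      (1 - 1 / (min n1 n2 : ℝ)) * tNorm R ^ 2 :=
  stmt_16_general n1 n2 n3 hn1 hn2 P hidem hsym R hR U S V h
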